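/- arXiv:2504.02251 — 5 statements merged into one kernel-verified Lean document; each statement's English description precedes it below -/
import Mathlib

section
/- Let X = [0, 1]^d with the Euclidean metric, and let μ : X → ℝ be 1-Lipschitz and attain its maximum at x* ∈ X. Suppose there exist constants C > 0 and β ≥ 1 such that μ(x*) − μ(x) ≥ C‖x* − x‖^β for all x ∈ X. Then the zooming dimension satisfies d_z ≤ (1 − 1/β)·d. -/
open Metric Set


lemma grid1 {δ R t : ℝ} (hδ : 0 < δ) {M : ℕ} (hM : 0 < M) (hRM : R ≤ M * δ)
    (ht0 : 0 ≤ t) (ht : t ≤ 2 * R) :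
    ∃ k : ℕ, k < M ∧ |t - (2 * k + 1) * δ| ≤ δ := by
  set j := ⌊t / (2 * δ)⌋₊ with hj
  by_cases hjM : j < M
  · refine ⟨j, hjM, ?_⟩
    have h1 : (j : ℝ) ≤ t / (2 * δ) := Nat.floor_le (by positivity)
    have h2 : t / (2 * δ) < j + 1 := Nat.lt_floor_add_one _
    have h1' : (j : ℝ) * (2 * δ) ≤ t := (le_div_iff₀ (by positivity)).mp h1
    have h2' : t < ((j : ℝ) + 1) * (2 * δ) := (div_lt_iff₀ (by positivity)).mp h2
    rw [abs_le]
    constructor <;> nlinarith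
  · push_neg at hjM
    refine ⟨M - 1, Nat.sub_lt hM one_pos, ?_⟩
    have h1 : (M : ℝ) ≤ t / (2 * δ) := le_trans (by exact_mod_cast hjM) (Nat.floor_le (by positivity))
    have h1' : (M : ℝ) * (2 * δ) ≤ t := (le_div_iff₀ (by positivity)).mp h1
    have hcast : ((M - 1 : ℕ) : ℝ) = (M : ℝ) - 1 := by
      have : 1 ≤ M := hM
      push_cast [Nat.cast_sub this]; ring
    rw [hcast, abs_le]
    constructor <;> nlinarith

lemma coord_le_dist {d : ℕ} (x y : EuclideanSpace ℝ (Fin d)) (i : Fin d) :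
    |x i - y i| ≤ dist x y := by
  rw [EuclideanSpace.dist_eq]
  have h1 : dist (x i) (y i) ^ 2 ≤ ∑ j, dist (x j) (y j) ^ 2 :=
    Finset.single_le_sum (f := fun j => dist (x j) (y j) ^ 2)
      (fun j _ => sq_nonneg _) (Finset.mem_univ i)
  calc |x i - y i| = Real.sqrt (dist (x i) (y i) ^ 2) := by
        rw [Real.sqrt_sq dist_nonneg, Real.dist_eq]
    _ ≤ _ := Real.sqrt_le_sqrt h1


/-- The minimal number of closed balls of radius `ρ` needed to cover the set `A`. -/
noncomputable def coveringNumber {X : Type*} [MetricSpace X] (A : Set X) (ρ : ℝ) : ℕ :=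
  sInf {n : ℕ | ∃ F : Finset X, F.card = n ∧ A ⊆ ⋃ x ∈ F, Metric.closedBall x ρ}

/-- The dimension associated with a scale-indexed counting function
`N : ℝ → ℕ`: `inf {d ≥ 0 : ∃ α > 0, N(r) ≤ α r^{-d} for all r ∈ (0,1]}`. -/
noncomputable def dimOf (N : ℝ → ℕ) : ℝ :=
  sInf {d : ℝ | 0 ≤ d ∧ ∃ α : ℝ, 0 < α ∧
    ∀ r ∈ Set.Ioc (0 : ℝ) 1, (N r : ℝ) ≤ α * r ^ (-d)}

/-- On `X = [0,1]^d` with the Euclidean metric, if the 1-Lipschitz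
reward `μ` attains its maximum at `x*` and satisfies the polynomial growth
condition `μ(x*) − μ(x) ≥ C‖x* − x‖^β` with `C > 0`, `β ≥ 1`, then the zooming
dimension satisfies `d_z ≤ (1 − 1/β)·d`. -/
theorem zooming_dim_le_of_poly_growth (d : ℕ)
    (X : Set (EuclideanSpace ℝ (Fin d)))
    (hX : X = {x : EuclideanSpace ℝ (Fin d) | ∀ i, x i ∈ Set.Icc (0 : ℝ) 1})
    (μ : EuclideanSpace ℝ (Fin d) → ℝ) (hμ : LipschitzOnWith 1 μ X)
    (xstar : EuclideanSpace ℝ (Fin d)) (hxstar : xstar ∈ X)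
    (hmax : ∀ x ∈ X, μ x ≤ μ xstar)
    (C β : ℝ) (hC : 0 < C) (hβ : 1 ≤ β)
    (hgrowth : ∀ x ∈ X, C * ‖xstar - x‖ ^ β ≤ μ xstar - μ x)
    (Nz : ℝ → ℕ)
    (hNz : ∀ r, Nz r =
      coveringNumber {x ∈ X | r ≤ μ xstar - μ x ∧ μ xstar - μ x < 2 * r} (r / 3)) :
    dimOf Nz ≤ (1 - 1 / β) * d := by
  classical
  have hβ0 : (0:ℝ) < β := lt_of_lt_of_le one_pos hβ
  set q : ℝ := 1 - 1 / β with hq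
  have hq0 : 0 ≤ q := by
    rw [hq, sub_nonneg, div_le_one hβ0]; exact hβ
  set K : ℝ := 3 * Real.sqrt d * (2 / C) ^ (1 / β : ℝ) with hKdef
  have hK0 : 0 ≤ K := by positivity
  have hmem : (q * d : ℝ) ∈ {d' : ℝ | 0 ≤ d' ∧ ∃ α : ℝ, 0 < α ∧
      ∀ r ∈ Set.Ioc (0 : ℝ) 1, (Nz r : ℝ) ≤ α * r ^ (-d')} := by
    refine ⟨mul_nonneg hq0 (Nat.cast_nonneg d), (K + 2) ^ d, by positivity, ?_⟩
    rintro r ⟨hr0, hr1⟩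
    set A := {x ∈ X | r ≤ μ xstar - μ x ∧ μ xstar - μ x < 2 * r} with hA
    set R : ℝ := (2 * r / C) ^ (1 / β : ℝ) with hRdef
    have hR0 : 0 < R := Real.rpow_pos_of_pos (by positivity) _
    set M : ℕ := ⌈3 * Real.sqrt d * R / r⌉₊ + 1 with hMdef
    have hM0 : 0 < M := Nat.succ_pos _
    set δ : ℝ := (r / 3) / Real.sqrt d with hδdef
    have hδnn : 0 ≤ δ := by positivity
    -- coordinate containment
    have hcoord : ∀ x ∈ A, ∀ i, |x i - xstar i| ≤ R := by
      rintro x ⟨hxX, _, hx2⟩ i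
      have hg := hgrowth x hxX
      have hnorm : ‖xstar - x‖ ^ (β : ℝ) < 2 * r / C := by
        rw [lt_div_iff₀ hC]; nlinarith
      have h1 : (‖xstar - x‖ ^ (β:ℝ)) ^ (1/β : ℝ) = ‖xstar - x‖ := by
        rw [← Real.rpow_mul (norm_nonneg _), mul_one_div_cancel hβ0.ne', Real.rpow_one]
      have h2 : ‖xstar - x‖ ≤ R := by
        rw [← h1, hRdef]
        exact Real.rpow_le_rpow (Real.rpow_nonneg (norm_nonneg _) _) hnorm.le (by positivity)
      calc |x i - xstar i| ≤ dist x xstar := coord_le_dist x xstar i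
        _ = ‖xstar - x‖ := by rw [dist_eq_norm, norm_sub_rev]
        _ ≤ R := h2
    -- the grid
    set g : (Fin d → Fin M) → EuclideanSpace ℝ (Fin d) :=
      fun f => WithLp.toLp 2 (fun i => xstar i - R + (2 * (f i : ℕ) + 1) * δ) with hgdef
    set F : Finset (EuclideanSpace ℝ (Fin d)) := Finset.image g Finset.univ with hF
    have hcover : A ⊆ ⋃ c ∈ F, Metric.closedBall c (r / 3) := by
      intro x hx
      have hkk : ∀ i : Fin d, ∃ k : ℕ, k < M ∧
          |(x i - (xstar i - R)) - (2 * k + 1) * δ| ≤ δ := by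
        intro i
        have hd0 : 0 < Real.sqrt d := Real.sqrt_pos.mpr (by exact_mod_cast i.pos)
        have hδ0 : 0 < δ := by rw [hδdef]; positivity
        have hRM : R ≤ M * δ := by
          have h1 : 3 * Real.sqrt d * R / r ≤ (M : ℝ) := by
            rw [hMdef]; push_cast
            exact le_add_of_le_of_nonneg (Nat.le_ceil _) one_pos.le
          have h2 : R = (3 * Real.sqrt d * R / r) * δ := by
            rw [hδdef]; field_simp
          rw [h2]
          exact mul_le_mul_of_nonneg_right h1 hδ0.le
        have hc := abs_le.mp (hcoord x hx i)
        exact grid1 hδ0 hM0 hRM (by linarith [hc.1]) (by linarith [hc.2])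
      choose k hk1 hk2 using hkk
      set c : EuclideanSpace ℝ (Fin d) := g (fun i => (⟨k i, hk1 i⟩ : Fin M)) with hc
      have hcF : c ∈ F := Finset.mem_image_of_mem g (Finset.mem_univ _)
      refine Set.mem_biUnion hcF ?_
      rw [Metric.mem_closedBall, EuclideanSpace.dist_eq]
      have hterm : ∀ i : Fin d, dist (x i) (c i) ^ 2 ≤ δ ^ 2 := by
        intro i
        have hci : c i = xstar i - R + (2 * (k i) + 1) * δ := rfl
        have he : x i - c i = (x i - (xstar i - R)) - (2 * (k i) + 1) * δ := by
          rw [hci]; ring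
        calc dist (x i) (c i) ^ 2 = |x i - c i| ^ 2 := by rw [Real.dist_eq]
          _ = |(x i - (xstar i - R)) - (2 * (k i) + 1) * δ| ^ 2 := by rw [he]
          _ ≤ δ ^ 2 := pow_le_pow_left₀ (abs_nonneg _) (hk2 i) 2
      have hsum : ∑ i, dist (x i) (c i) ^ 2 ≤ (d : ℝ) * δ ^ 2 := by
        calc ∑ i, dist (x i) (c i) ^ 2 ≤ ∑ _i : Fin d, δ ^ 2 :=
              Finset.sum_le_sum (fun i _ => hterm i)
          _ = (d : ℝ) * δ ^ 2 := by
              rw [Finset.sum_const, Finset.card_univ, Fintype.card_fin, nsmul_eq_mul]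
      have hfin : Real.sqrt ((d : ℝ) * δ ^ 2) ≤ r / 3 := by
        rcases Nat.eq_zero_or_pos d with h | h
        · subst h; simp; positivity
        · have hd0 : (0:ℝ) < Real.sqrt d := Real.sqrt_pos.mpr (by exact_mod_cast h)
          have : (d : ℝ) * δ ^ 2 = (r / 3) ^ 2 := by
            rw [hδdef, div_pow, Real.sq_sqrt (Nat.cast_nonneg d)]
            field_simp
          rw [this, Real.sqrt_sq (by positivity)]
      exact le_trans (Real.sqrt_le_sqrt hsum) hfin
    -- counting
    have hcount : Nz r ≤ M ^ d := by
      rw [hNz r]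
      calc coveringNumber A (r / 3) ≤ F.card := Nat.sInf_le ⟨F, rfl, hcover⟩
        _ ≤ (Finset.univ : Finset (Fin d → Fin M)).card := Finset.card_image_le
        _ = M ^ d := by rw [Finset.card_univ, Fintype.card_fun, Fintype.card_fin, Fintype.card_fin]
    -- arithmetic
    have hone : (1:ℝ) ≤ r ^ (-q) :=
      Real.one_le_rpow_of_pos_of_le_one_of_nonpos hr0 hr1 (neg_nonpos.mpr hq0)
    have hMle : (M : ℝ) ≤ (K + 2) * r ^ (-q) := by
      have hKr : 3 * Real.sqrt d * R / r = K * r ^ (-q) := by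
        have hRsplit : R = (2 / C) ^ (1/β : ℝ) * r ^ (1/β : ℝ) := by
          rw [hRdef, show (2 * r / C) = (2 / C) * r by ring,
            Real.mul_rpow (by positivity) hr0.le]
        have hexp : -q = 1/β - 1 := by rw [hq]; ring
        have hrr : r ^ (1/β : ℝ) / r = r ^ (-q) := by
          rw [hexp, Real.rpow_sub hr0, Real.rpow_one]
        rw [hRsplit, hKdef, ← hrr]
        ring
      have hceil : (⌈3 * Real.sqrt d * R / r⌉₊ : ℝ) ≤ 3 * Real.sqrt d * R / r + 1 :=
        (Nat.ceil_lt_add_one (by positivity)).le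
      have : (M : ℝ) ≤ 3 * Real.sqrt d * R / r + 2 := by
        rw [hMdef]; push_cast; linarith
      rw [hKr] at this
      have h2r : (2:ℝ) ≤ 2 * r ^ (-q) := by linarith
      nlinarith [mul_nonneg hK0 (le_trans one_pos.le hone)]
    calc (Nz r : ℝ) ≤ ((M : ℕ) ^ d : ℕ) := by exact_mod_cast hcount
      _ = (M : ℝ) ^ d := by push_cast; ring
      _ ≤ ((K + 2) * r ^ (-q)) ^ d :=
          pow_le_pow_left₀ (Nat.cast_nonneg M) hMle d
      _ = (K + 2) ^ d * (r ^ (-q)) ^ d := mul_pow _ _ _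
      _ = (K + 2) ^ d * r ^ (-(q * d)) := by
          rw [← Real.rpow_natCast (r ^ (-q)) d, ← Real.rpow_mul hr0.le, neg_mul]
  have hbdd : BddBelow {d' : ℝ | 0 ≤ d' ∧ ∃ α : ℝ, 0 < α ∧
      ∀ r ∈ Set.Ioc (0 : ℝ) 1, (Nz r : ℝ) ≤ α * r ^ (-d')} :=
    ⟨0, fun y hy => hy.1⟩
  exact csInf_le hbdd hmem
end

section
/- Let (X, D) be a metric space, μ : X → ℝ a 1-Lipschitz function, and x* ∈ X with μ(x*) ≥ μ(x) for all x ∈ X. Let A ⊆ X be a finite nonempty set, ε > 0, and μ̂ : A → ℝ an estimate satisfying |μ̂(x) − μ(x)| ≤ ε for all x ∈ A. If x** ∈ A satisfies D(x*, x**) ≤ ε, then μ̂(x**) ≥ max_{x ∈ A} μ̂(x) − 3ε; in particular, x** is not removed by the elimination rule that discards points whose estimate is more than 3ε below the best estimate, so the optimal arm remains covered by the surviving region ⋃_{x ∈ A⁺} B(x, ε), where A⁺ = {x ∈ A : μ̂(x) ≥ max_{y∈A} μ̂(y) − 3ε}. -/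
open Metric Set

theorem Finset.sup'_le_add_of_abs_sub_le {ι : Type*} {A : Finset ι} (hA : A.Nonempty)
    {f g : ι → ℝ} {M ε : ℝ} (hfg : ∀ x ∈ A, |f x - g x| ≤ ε) (hg : ∀ x ∈ A, g x ≤ M) :
    A.sup' hA f ≤ M + ε :=
  Finset.sup'_le hA f fun x hx => by
    linarith [(abs_le.1 (hfg x hx)).2, hg x hx]

theorem sup'_sub_three_mul_le_of_dist_argmax_le {X : Type*} [PseudoMetricSpace X]
    {μ μhat : X → ℝ} (hμ : LipschitzWith 1 μ) {xstar : X} (hmax : ∀ x, μ x ≤ μ xstar)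
    {A : Finset X} (hA : A.Nonempty) {ε : ℝ} (hest : ∀ x ∈ A, |μhat x - μ x| ≤ ε)
    {xss : X} (hxss : xss ∈ A) (hclose : dist xstar xss ≤ ε) :
    A.sup' hA μhat - 3 * ε ≤ μhat xss := by
  have hsup : A.sup' hA μhat ≤ μ xstar + ε :=
    Finset.sup'_le_add_of_abs_sub_le hA hest fun x _ => hmax x
  have hlip : μ xstar ≤ μ xss + ε := by
    have := hμ.le_add_mul xstar xss
    rw [NNReal.coe_one, one_mul] at this
    linarith
  linarith [(abs_le.1 (hest xss hxss)).1]

theorem optimal_arm_not_eliminated_general {X : Type*} [MetricSpace X]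
    (μ : X → ℝ) (hμ : LipschitzWith 1 μ)
    (xstar : X) (hmax : ∀ x, μ x ≤ μ xstar)
    (A : Finset X) (hA : A.Nonempty) (ε : ℝ)
    (μhat : X → ℝ) (hest : ∀ x ∈ A, |μhat x - μ x| ≤ ε)
    (xss : X) (hxss : xss ∈ A) (hclose : dist xstar xss ≤ ε) :
    A.sup' hA μhat - 3 * ε ≤ μhat xss ∧
    xstar ∈ ⋃ x ∈ {y ∈ (A : Set X) | A.sup' hA μhat - 3 * ε ≤ μhat y},
      Metric.closedBall x ε := by
  have hsurvives := sup'_sub_three_mul_le_of_dist_argmax_le hμ hmax hA hest hxss hclose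
  exact ⟨hsurvives, mem_iUnion₂.2 ⟨xss, ⟨hxss, hsurvives⟩, mem_closedBall.2 hclose⟩⟩

/-- Under the clean event, if `x** ∈ A` is within distance `ε` of
the optimal arm `x*`, then `μ̂(x**) ≥ max_{x∈A} μ̂(x) − 3ε`, so `x**` survives
the elimination rule with threshold `3ε` and the optimal arm remains covered by
the surviving region `⋃_{x ∈ A⁺} B(x, ε)`. -/
theorem optimal_arm_not_eliminated {X : Type*} [MetricSpace X]
    (μ : X → ℝ) (hμ : LipschitzWith 1 μ)
    (xstar : X) (hmax : ∀ x, μ x ≤ μ xstar)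
    (A : Finset X) (hA : A.Nonempty) (ε : ℝ) (hε : 0 < ε)
    (μhat : X → ℝ) (hest : ∀ x ∈ A, |μhat x - μ x| ≤ ε)
    (xss : X) (hxss : xss ∈ A) (hclose : dist xstar xss ≤ ε) :
    A.sup' hA μhat - 3 * ε ≤ μhat xss ∧
    xstar ∈ ⋃ x ∈ {y ∈ (A : Set X) | A.sup' hA μhat - 3 * ε ≤ μhat y},
      Metric.closedBall x ε :=
  optimal_arm_not_eliminated_general μ hμ xstar hmax A hA ε μhat hest xss hxss hclose
end

section
/- Let (X, D) be a metric space of diameter at most 1, μ : X → ℝ a 1-Lipschitz function, and x* ∈ X with μ(x*) ≥ μ(x) for all x ∈ X; write μ* = μ(x*) and Δ_x = μ* − μ(x). Let ε_m = 2^{−m}. Suppose sets C₁, C₂, … ⊆ X, finite nonempty sets A₁, A₂, … and estimates μ̂_m : A_m → ℝ satisfy, for every m ≥ 1: (i) C₁ = X; (ii) A_m ⊆ C_m is an ε_m-covering of C_m; (iii) |μ̂_m(x) − μ(x)| ≤ ε_m for all x ∈ A_m; (iv) A_m⁺ = {x ∈ A_m : μ̂_m(x) ≥ max_{y∈A_m}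 μ̂_m(y) − 3ε_m}; and (v) C_{m+1} = ⋃_{x ∈ A_m⁺} B(x, ε_m). Then x* ∈ C_m for every m ≥ 1, and for every m ≥ 1 and every x ∈ A_m, Δ_x ≤ 7·ε_{m−1} (with ε₀ = 1). -/
/-!
Under the clean event, the point of `A m` within `ε_m` of `x*` has estimate at least
`μ* - 2ε_m`, while no estimate exceeds `μ* + ε_m`; so it survives the `3ε_m` elimination and
its `ε_m`-ball carries `x*` into `C (m + 1)`. Conversely a survivor `z` of round `m` has
`μ z ≥ μ* - 6ε_m`, and every point of `A (m + 1) ⊆ C (m + 1)` lies within `ε_m` of such a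
survivor, whence a gap of at most `7ε_m`. In the first round the diameter bound gives a gap
of at most `1`.
-/

open Metric Set

theorem LipschitzWith.sub_le_dist {X : Type*} [PseudoMetricSpace X] {f : X → ℝ}
    (hf : LipschitzWith 1 f) (x y : X) : f x - f y ≤ dist x y :=
  sub_le_iff_le_add'.2 (by simpa using hf.le_add_mul x y)

section Elimination

variable {X : Type*} {μ μhat : X → ℝ} {xstar x y z : X} {A : Finset X} {ε : ℝ}

theorem Finset.sup'_le_max_add_of_abs_sub_le (hA : A.Nonempty) (hmax : ∀ x, μ x ≤ μ xstar)
    (hest : ∀ x ∈ A, |μhat x - μ x| ≤ ε) : A.sup' hA μhat ≤ μ xstar + ε :=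
  Finset.sup'_le hA μhat fun x hx => by
    linarith [(abs_le.mp (hest x hx)).2, hmax x]

variable [PseudoMetricSpace X]

theorem Finset.sup'_sub_three_mul_le_of_dist_le (hA : A.Nonempty) (hμ : LipschitzWith 1 μ)
    (hmax : ∀ x, μ x ≤ μ xstar) (hest : ∀ x ∈ A, |μhat x - μ x| ≤ ε) (hy : y ∈ A)
    (hdist : dist xstar y ≤ ε) : A.sup' hA μhat - 3 * ε ≤ μhat y := by
  linarith [Finset.sup'_le_max_add_of_abs_sub_le hA hmax hest, (abs_le.mp (hest y hy)).1,
    hμ.sub_le_dist xstar y]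

theorem sub_le_seven_mul_of_dist_survivor_le (hA : A.Nonempty) (hμ : LipschitzWith 1 μ)
    (hest : ∀ x ∈ A, |μhat x - μ x| ≤ ε) (hy : y ∈ A) (hdist : dist xstar y ≤ ε) (hz : z ∈ A)
    (hsurv : A.sup' hA μhat - 3 * ε ≤ μhat z) (hxz : dist x z ≤ ε) :
    μ xstar - μ x ≤ 7 * ε := by
  have hy_le_sup : μhat y ≤ A.sup' hA μhat := A.le_sup' μhat hy
  linarith [(abs_le.mp (hest y hy)).1, (abs_le.mp (hest z hz)).2, hμ.sub_le_dist xstar y,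
    hμ.sub_le_dist z x, dist_comm x z]

end Elimination

/-- Q-LAE under the clean event: with `ε_m = 2^{−m}`, active
regions `C_m`, coverings `A_m`, estimates `μ̂_m` within `ε_m`, elimination sets
`A_m⁺` and refinement `C_{m+1} = ⋃_{x ∈ A_m⁺} B(x, ε_m)`, the optimal arm
`x*` stays in every `C_m`, and every `x ∈ A_m` has optimality gap
`Δ_x ≤ 7·ε_{m−1}` (with `ε₀ = 1`). -/
theorem qlae_clean_event {X : Type*} [MetricSpace X]
    (hdiam : Metric.diam (Set.univ : Set X) ≤ 1)
    (μ : X → ℝ) (hμ : LipschitzWith 1 μ)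
    (xstar : X) (hmax : ∀ x, μ x ≤ μ xstar)
    (C : ℕ → Set X) (A Aplus : ℕ → Finset X) (μhat : ℕ → X → ℝ)
    (hAne : ∀ m, 1 ≤ m → (A m).Nonempty)
    (hC1 : C 1 = Set.univ)
    (hAsub : ∀ m, 1 ≤ m → (A m : Set X) ⊆ C m)
    (hAcov : ∀ m, 1 ≤ m → C m ⊆ ⋃ x ∈ A m, Metric.closedBall x ((1 / 2 : ℝ) ^ m))
    (hest : ∀ m, 1 ≤ m → ∀ x ∈ A m, |μhat m x - μ x| ≤ (1 / 2 : ℝ) ^ m)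
    (hAplus : ∀ m, ∀ hm : 1 ≤ m, (Aplus m : Set X) =
      {y ∈ (A m : Set X) |
        (A m).sup' (hAne m hm) (μhat m) - 3 * (1 / 2 : ℝ) ^ m ≤ μhat m y})
    (hCnext : ∀ m, 1 ≤ m →
      C (m + 1) = ⋃ x ∈ (Aplus m : Set X), Metric.closedBall x ((1 / 2 : ℝ) ^ m)) :
    (∀ m, 1 ≤ m → xstar ∈ C m) ∧
    (∀ m, 1 ≤ m → ∀ x ∈ A m, μ xstar - μ x ≤ 7 * (1 / 2 : ℝ) ^ (m - 1)) := by
  have hnear : ∀ m, 1 ≤ m → xstar ∈ C m → ∃ y ∈ A m, dist xstar y ≤ (1 / 2 : ℝ) ^ m := by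
    intro m hm hx
    simpa only [mem_iUnion₂, mem_closedBall, exists_prop] using hAcov m hm hx
  have hsurv : ∀ m (hm : 1 ≤ m) z, z ∈ Aplus m ↔
      z ∈ A m ∧ (A m).sup' (hAne m hm) (μhat m) - 3 * (1 / 2 : ℝ) ^ m ≤ μhat m z := by
    intro m hm z
    rw [← Finset.mem_coe, hAplus m hm, mem_ofPred_eq, Finset.mem_coe]
  have hstar : ∀ m, 1 ≤ m → xstar ∈ C m := by
    intro m hm
    induction m, hm using Nat.le_induction with
    | base => simp [hC1]
    | succ m hm ih =>
      obtain ⟨y, hy, hdist⟩ := hnear m hm ih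
      rw [hCnext m hm, mem_iUnion₂]
      exact ⟨y, (hsurv m hm y).2 ⟨hy, Finset.sup'_sub_three_mul_le_of_dist_le (hAne m hm) hμ
        hmax (hest m hm) hy hdist⟩, hdist⟩
  refine ⟨hstar, fun m hm x hx => ?_⟩
  obtain rfl | hm' := hm.eq_or_lt
  · have hbdd : Bornology.IsBounded (univ : Set X) :=
      ((Bornology.isBounded_biUnion_finset (A 1)).2 fun _ _ => isBounded_closedBall).subset
        (hC1 ▸ hAcov 1 le_rfl)
    calc μ xstar - μ x ≤ dist xstar x := hμ.sub_le_dist xstar x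
      _ ≤ 1 := (dist_le_diam_of_mem hbdd (mem_univ xstar) (mem_univ x)).trans hdiam
      _ ≤ 7 * (1 / 2 : ℝ) ^ (1 - 1) := by norm_num
  · obtain ⟨k, rfl⟩ : ∃ k, m = k + 1 := ⟨m - 1, by omega⟩
    have hk : 1 ≤ k := by omega
    obtain ⟨z, hz, hxz⟩ := mem_iUnion₂.mp (hCnext k hk ▸ hAsub (k + 1) hm hx)
    obtain ⟨hzA, hzsurv⟩ := (hsurv k hk z).1 hz
    obtain ⟨y, hy, hdist⟩ := hnear k hk (hstar k hk)
    simpa using sub_le_seven_mul_of_dist_survivor_le (hAne k hk) hμ (hest k hk) hy hdist hzA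
      hzsurv hxz
end

section
/- Let (X, D) be a metric space, μ : X → ℝ a 1-Lipschitz function, and x* ∈ X with μ(x*) ≥ μ(x) for all x ∈ X; write μ* = μ(x*). Let S ⊆ X be a finite nonempty set (the active arms), and let μ̂ : S → ℝ and ε : S → ℝ with ε(x) ≥ 0 satisfy |μ̂(x) − μ(x)| ≤ ε(x) for all x ∈ S. Suppose x* is covered, i.e., there exists x** ∈ S with D(x*, x**) ≤ ε(x**). If x_s ∈ S maximizes the index μ̂(x) + 2ε(x) over x ∈ S, then the optimality gap of x_s satisfies μ* − μ(x_s) ≤ 3ε(x_s). -/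
lemma LipschitzWith.le_add_two_mul_of_dist_le {X : Type*} [PseudoMetricSpace X]
    {μ μhat ε : X → ℝ} (hμ : LipschitzWith 1 μ) {x y : X}
    (hest : |μhat x - μ x| ≤ ε x) (hdist : dist y x ≤ ε x) :
    μ y ≤ μhat x + 2 * ε x := by
  have hlip : μ y - μ x ≤ dist y x := by
    simpa [Real.dist_eq] using (le_abs_self _).trans (hμ.dist_le_mul y x)
  linarith [(abs_le.mp hest).1]

lemma add_two_mul_le_add_three_mul {μ μhat ε : ℝ} (hest : |μhat - μ| ≤ ε) :
    μhat + 2 * ε ≤ μ + 3 * ε := by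
  linarith [(abs_le.mp hest).2]

theorem qzooming_selected_gap_general {X : Type*} [MetricSpace X]
    (μ : X → ℝ) (hμ : LipschitzWith 1 μ)
    (xstar : X)
    (S : Finset X)
    (μhat : X → ℝ) (ε : X → ℝ)
    (hest : ∀ x ∈ S, |μhat x - μ x| ≤ ε x)
    (hcov : ∃ xss ∈ S, dist xstar xss ≤ ε xss)
    (xs : X) (hxs : xs ∈ S)
    (hsel : ∀ x ∈ S, μhat x + 2 * ε x ≤ μhat xs + 2 * ε xs) :
    μ xstar - μ xs ≤ 3 * ε xs := by
  obtain ⟨xss, hxss, hdist⟩ := hcov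
  have hgap : μ xstar ≤ μ xs + 3 * ε xs :=
    calc μ xstar ≤ μhat xss + 2 * ε xss := hμ.le_add_two_mul_of_dist_le (hest xss hxss) hdist
      _ ≤ μhat xs + 2 * ε xs := hsel xss hxss
      _ ≤ μ xs + 3 * ε xs := add_two_mul_le_add_three_mul (hest xs hxs)
  linarith

/-- Q-Zooming selection rule, under the clean event: if the
optimal arm is covered by the confidence ball of some active arm and `x_s`
maximizes the index `μ̂(x) + 2ε(x)` over the active set `S`, then the
optimality gap of `x_s` is at most `3ε(x_s)`. -/
theorem qzooming_selected_gap {X : Type*} [MetricSpace X]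
    (μ : X → ℝ) (hμ : LipschitzWith 1 μ)
    (xstar : X) (hmax : ∀ x, μ x ≤ μ xstar)
    (S : Finset X) (hS : S.Nonempty)
    (μhat : X → ℝ) (ε : X → ℝ) (hε : ∀ x ∈ S, 0 ≤ ε x)
    (hest : ∀ x ∈ S, |μhat x - μ x| ≤ ε x)
    (hcov : ∃ xss ∈ S, dist xstar xss ≤ ε xss)
    (xs : X) (hxs : xs ∈ S)
    (hsel : ∀ x ∈ S, μhat x + 2 * ε x ≤ μhat xs + 2 * ε xs) :
    μ xstar - μ xs ≤ 3 * ε xs :=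
  qzooming_selected_gap_general μ hμ xstar S μhat ε hest hcov xs hxs hsel
end

section
/- Let X = [0, 1]^d with the Euclidean metric, m > 0, and let μ : X → ℝ be 1-Lipschitz, m-strongly concave on X, and attain its maximum at x* ∈ X. Then the zooming dimension satisfies d_z ≤ d/2. -/
open Metric Set

/-- One-dimensional grid lemma: any `u ∈ [0, K·s]` is within `s/2` of some grid
point `(j + 1/2)·s`, `j < K`. -/
lemma grid_lemma (s : ℝ) (hs : 0 < s) (K : ℕ) (hK : 0 < K) (u : ℝ)
    (hu0 : 0 ≤ u) (huK : u ≤ K * s) :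
    ∃ j : Fin K, |u - ((j : ℝ) + 1 / 2) * s| ≤ s / 2 := by
  set j0 : ℕ := min (⌊u / s⌋₊) (K - 1) with hj0def
  have hj0K : j0 < K := lt_of_le_of_lt (min_le_right _ _) (Nat.sub_lt hK one_pos)
  refine ⟨⟨j0, hj0K⟩, ?_⟩
  have hlow : (j0 : ℝ) * s ≤ u := by
    have h1 : (⌊u / s⌋₊ : ℝ) ≤ u / s := Nat.floor_le (div_nonneg hu0 hs.le)
    have h2 : (j0 : ℝ) ≤ (⌊u / s⌋₊ : ℝ) := by exact_mod_cast min_le_left _ _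
    have h3 : (j0 : ℝ) ≤ u / s := h2.trans h1
    calc (j0 : ℝ) * s ≤ (u / s) * s := by nlinarith
      _ = u := by field_simp
  have hhigh : u ≤ ((j0 : ℝ) + 1) * s := by
    rcases le_or_gt (⌊u / s⌋₊) (K - 1) with h | h
    · have hj0 : j0 = ⌊u / s⌋₊ := min_eq_left h
      have h1 : u / s < (⌊u / s⌋₊ : ℝ) + 1 := Nat.lt_floor_add_one _
      have h2 : u < ((⌊u / s⌋₊ : ℝ) + 1) * s := by
        calc u = (u / s) * s := by field_simp
          _ < ((⌊u / s⌋₊ : ℝ) + 1) * s := by nlinarith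
      rw [hj0]; exact h2.le
    · have hj0 : j0 = K - 1 := min_eq_right h.le
      have h1 : j0 + 1 = K := by rw [hj0]; omega
      have h2 : ((j0 : ℝ) + 1) = (K : ℝ) := by exact_mod_cast congrArg (Nat.cast : ℕ → ℝ) h1
      rw [h2]; exact huK
  rw [abs_le]; constructor <;> nlinarith

set_option maxHeartbeats 1000000 in
/-- On `X = [0,1]^d` with the Euclidean metric, if the reward `μ`
is 1-Lipschitz, `m`-strongly concave on `X`, and attains its maximum at
`x* ∈ X`, then the zooming dimension satisfies `d_z ≤ d/2`. -/
theorem zooming_dim_le_half_of_strong_concavity (d : ℕ)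
    (X : Set (EuclideanSpace ℝ (Fin d)))
    (hX : X = {x : EuclideanSpace ℝ (Fin d) | ∀ i, x i ∈ Set.Icc (0 : ℝ) 1})
    (m : ℝ) (hm : 0 < m)
    (μ : EuclideanSpace ℝ (Fin d) → ℝ) (hμ : LipschitzOnWith 1 μ X)
    (hconc : ∀ x ∈ X, ∀ y ∈ X, ∀ t ∈ Set.Icc (0 : ℝ) 1,
      t * μ x + (1 - t) * μ y + m / 2 * t * (1 - t) * ‖x - y‖ ^ 2
        ≤ μ (t • x + (1 - t) • y))
    (xstar : EuclideanSpace ℝ (Fin d)) (hxstar : xstar ∈ X)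
    (hmax : ∀ x ∈ X, μ x ≤ μ xstar)
    (Nz : ℝ → ℕ)
    (hNz : ∀ r, Nz r =
      coveringNumber {x ∈ X | r ≤ μ xstar - μ x ∧ μ xstar - μ x < 2 * r} (r / 3)) :
    dimOf Nz ≤ (d : ℝ) / 2 := by
  classical
  have hsm : 0 < Real.sqrt m := Real.sqrt_pos.mpr hm
  have hsd0 : (0:ℝ) < Real.sqrt (d + 1) := Real.sqrt_pos.mpr (by positivity)
  set sd : ℝ := Real.sqrt (d + 1) with hsddef
  set C : ℝ := 9 * sd / Real.sqrt m + 2 with hCdef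
  have hC0 : 0 < C := by positivity
  apply csInf_le ⟨0, fun y hy => hy.1⟩
  refine ⟨by positivity, C ^ d, by positivity, ?_⟩
  rintro r ⟨hr0, hr1⟩
  rw [hNz r]
  have hsr : 0 < Real.sqrt r := Real.sqrt_pos.mpr hr0
  have hrr : Real.sqrt r * Real.sqrt r = r := Real.mul_self_sqrt hr0.le
  have hsd2 : sd * sd = (d : ℝ) + 1 := Real.mul_self_sqrt (by positivity)
  have hmm : Real.sqrt m * Real.sqrt m = m := Real.mul_self_sqrt hm.le
  set ρ : ℝ := r / 3 with hρdef
  have hρ0 : 0 < ρ := by positivity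
  set s : ℝ := 2 * ρ / sd with hsdef
  have hs0 : 0 < s := by positivity
  set R : ℝ := 3 * Real.sqrt r / Real.sqrt m with hRdef
  have hR0 : 0 < R := by positivity
  set K : ℕ := ⌈2 * R / s⌉₊ + 1 with hKdef
  have hK0 : 0 < K := Nat.succ_pos _
  have hKcast : (K : ℝ) = (⌈2 * R / s⌉₊ : ℝ) + 1 := by push_cast [hKdef]; ring
  have hKs : 2 * R ≤ (K : ℝ) * s := by
    have h1 : 2 * R / s ≤ (⌈2 * R / s⌉₊ : ℝ) := Nat.le_ceil _
    have h2 : 2 * R = (2 * R / s) * s := by field_simp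
    rw [h2, hKcast]; nlinarith
  set g : (Fin d → Fin K) → EuclideanSpace ℝ (Fin d) :=
    fun j => WithLp.toLp 2 (fun i => xstar i - R + ((j i : ℝ) + 1 / 2) * s) with hgdef
  set F : Finset (EuclideanSpace ℝ (Fin d)) := Finset.image g Finset.univ with hFdef
  -- the covering property
  have hcover : {x ∈ X | r ≤ μ xstar - μ x ∧ μ xstar - μ x < 2 * r}
      ⊆ ⋃ p ∈ F, closedBall p ρ := by
    rintro x ⟨hxX, hΔ1, hΔ2⟩
    -- midpoint is in X
    have hmid : (1 / 2 : ℝ) • x + (1 - 1 / 2 : ℝ) • xstar ∈ X := by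
      rw [hX]; intro i
      have hx1 : x i ∈ Icc (0:ℝ) 1 := by rw [hX] at hxX; exact hxX i
      have hx2 : xstar i ∈ Icc (0:ℝ) 1 := by rw [hX] at hxstar; exact hxstar i
      have heq : ((1 / 2 : ℝ) • x + (1 - 1 / 2 : ℝ) • xstar) i
          = (1 / 2 : ℝ) * x i + (1 - 1 / 2 : ℝ) * xstar i := rfl
      rw [heq, Set.mem_Icc]
      obtain ⟨a1, a2⟩ := hx1
      obtain ⟨b1, b2⟩ := hx2
      constructor <;> nlinarith
    have hsc := hconc x hxX xstar hxstar (1 / 2) ⟨by norm_num, by norm_num⟩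
    have hle := hmax _ hmid
    -- strong concavity bound on the norm
    have hnorm2 : ‖x - xstar‖ ^ 2 ≤ 8 * r / m := by
      have h := hsc.trans hle
      rw [le_div_iff₀ hm]
      nlinarith [h, hΔ2]
    have hnorm : ‖x - xstar‖ ≤ R := by
      have hR2 : 8 * r / m ≤ R ^ 2 := by
        have hR2' : R ^ 2 = 9 * r / m := by
          rw [hRdef, div_pow, mul_pow]
          rw [show Real.sqrt r ^ 2 = r from by nlinarith,
              show Real.sqrt m ^ 2 = m from by nlinarith]
          norm_num
        rw [hR2', div_le_div_iff₀ hm hm]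
        nlinarith
      calc ‖x - xstar‖ = Real.sqrt (‖x - xstar‖ ^ 2) :=
            (Real.sqrt_sq (norm_nonneg _)).symm
        _ ≤ Real.sqrt (R ^ 2) := Real.sqrt_le_sqrt (hnorm2.trans hR2)
        _ = R := Real.sqrt_sq hR0.le
    -- coordinatewise bound
    have hcoord : ∀ i, |x i - xstar i| ≤ R := by
      intro i
      have h1 : |x i - xstar i| ^ 2 ≤ ‖x - xstar‖ ^ 2 := by
        rw [EuclideanSpace.norm_eq, Real.sq_sqrt (by positivity)]
        have heq : ‖(x - xstar) i‖ ^ 2 = |x i - xstar i| ^ 2 := by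
          rw [show (x - xstar) i = x i - xstar i from rfl, Real.norm_eq_abs]
        calc |x i - xstar i| ^ 2 = ‖(x - xstar) i‖ ^ 2 := heq.symm
          _ ≤ ∑ j, ‖(x - xstar) j‖ ^ 2 :=
            Finset.single_le_sum (f := fun j => ‖(x - xstar) j‖ ^ 2)
              (fun j _ => by positivity) (Finset.mem_univ i)
      calc |x i - xstar i| = Real.sqrt (|x i - xstar i| ^ 2) :=
            (Real.sqrt_sq (abs_nonneg _)).symm
        _ ≤ Real.sqrt (R ^ 2) := Real.sqrt_le_sqrt
            (by nlinarith [h1, hnorm, norm_nonneg (x - xstar), hR0])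
        _ = R := Real.sqrt_sq hR0.le
    -- choose grid indices
    have hj : ∀ i : Fin d, ∃ j : Fin K,
        |(x i - (xstar i - R)) - ((j : ℝ) + 1 / 2) * s| ≤ s / 2 := by
      intro i
      have habs := abs_le.mp (hcoord i)
      exact grid_lemma s hs0 K hK0 (x i - (xstar i - R))
        (by linarith [habs.1]) (by linarith [habs.2, hKs])
    choose j hjj using hj
    refine mem_iUnion₂.mpr ⟨g j, Finset.mem_image_of_mem g (Finset.mem_univ j), ?_⟩
    rw [mem_closedBall, EuclideanSpace.dist_eq]
    have hterm : ∀ i, dist (x i) (g j i) ^ 2 ≤ (s / 2) ^ 2 := by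
      intro i
      have h1 : dist (x i) (g j i) ≤ s / 2 := by
        rw [Real.dist_eq]
        have : x i - g j i = (x i - (xstar i - R)) - ((j i : ℝ) + 1 / 2) * s := by
          simp only [hgdef, WithLp.ofLp_toLp]; ring
        rw [this]; exact hjj i
      exact pow_le_pow_left₀ dist_nonneg h1 2
    calc Real.sqrt (∑ i, dist (x i) (g j i) ^ 2)
        ≤ Real.sqrt ((d : ℝ) * (s / 2) ^ 2) := by
          apply Real.sqrt_le_sqrt
          calc ∑ i, dist (x i) (g j i) ^ 2 ≤ ∑ _i : Fin d, (s / 2) ^ 2 :=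
                Finset.sum_le_sum (fun i _ => hterm i)
            _ = (d : ℝ) * (s / 2) ^ 2 := by
                rw [Finset.sum_const, Finset.card_univ, Fintype.card_fin]; ring
      _ ≤ ρ := by
          calc Real.sqrt ((d : ℝ) * (s / 2) ^ 2) ≤ Real.sqrt (ρ ^ 2) := by
                apply Real.sqrt_le_sqrt
                have hssd : s * sd = 2 * ρ := by
                  rw [hsdef]; field_simp
                nlinarith [hssd, hsd2, sq_nonneg s]
            _ = ρ := Real.sqrt_sq hρ0.le
  -- covering number bound
  have hcn : coveringNumber {x ∈ X | r ≤ μ xstar - μ x ∧ μ xstar - μ x < 2 * r} ρ ≤ K ^ d := by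
    have h1 : coveringNumber {x ∈ X | r ≤ μ xstar - μ x ∧ μ xstar - μ x < 2 * r} ρ ≤ F.card :=
      Nat.sInf_le ⟨F, rfl, hcover⟩
    have h2 : F.card ≤ K ^ d := by
      calc F.card ≤ (Finset.univ : Finset (Fin d → Fin K)).card := Finset.card_image_le
        _ = K ^ d := by rw [Finset.card_univ, Fintype.card_fun]; simp
    exact h1.trans h2
  -- numeric bound on K
  have hrpow : r ^ (-(1/2 : ℝ)) = (Real.sqrt r)⁻¹ := by
    rw [Real.rpow_neg hr0.le, ← Real.sqrt_eq_rpow]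
  have hrinv1 : 1 ≤ (Real.sqrt r)⁻¹ := by
    have hc := mul_inv_cancel₀ hsr.ne'
    nlinarith [mul_nonneg (inv_nonneg.mpr hsr.le)
      (sub_nonneg.mpr (Real.sqrt_le_one.mpr hr1))]
  have hKle : (K : ℝ) ≤ C * (Real.sqrt r)⁻¹ := by
    have h2 : (⌈2 * R / s⌉₊ : ℝ) < 2 * R / s + 1 := Nat.ceil_lt_add_one (by positivity)
    have h3 : 2 * R / s = (9 * sd / Real.sqrt m) * (Real.sqrt r)⁻¹ := by
      rw [hRdef, hsdef, hρdef]
      field_simp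
      linear_combination 9 * hrr
    rw [hKcast, hCdef]
    nlinarith [hrinv1, hsd0, hsm, hsr]
  -- conclude
  have hfinal : ((K : ℝ)) ^ d ≤ C ^ d * r ^ (-((d : ℝ) / 2)) := by
    have h1 : ((K : ℝ)) ^ d ≤ (C * (Real.sqrt r)⁻¹) ^ d :=
      pow_le_pow_left₀ (by positivity) hKle d
    have h2 : (C * (Real.sqrt r)⁻¹) ^ d = C ^ d * ((Real.sqrt r)⁻¹) ^ d := mul_pow _ _ _
    have h3 : ((Real.sqrt r)⁻¹) ^ d = r ^ (-((d : ℝ) / 2)) := by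
      rw [← hrpow, ← Real.rpow_natCast (r ^ (-(1/2 : ℝ))) d, ← Real.rpow_mul hr0.le]
      congr 1; ring
    rw [h2, h3] at h1; exact h1
  have hcast : ((coveringNumber {x ∈ X | r ≤ μ xstar - μ x ∧ μ xstar - μ x < 2 * r} ρ : ℕ) : ℝ)
      ≤ ((K : ℝ)) ^ d := by exact_mod_cast hcn
  exact hcast.trans hfinal
end
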